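/- The first-order quantum Wasserstein distance W_1^d is jointly convex: for states ρ₁, σ₁, ρ₂, σ₂ and r₁, r₂ ≥ 0 with r₁ + r₂ = 1, W_1^d(r₁ρ₁ + r₂ρ₂, r₁σ₁ + r₂σ₂) ≤ r₁ W_1^d(ρ₁,σ₁) + r₂ W_1^d(ρ₂,σ₂). -/

import Mathlib

/-! Concatenating the scaled plans `r₁ Q₁` and `r₂ Q₂` gives a plan between the mixtures of cost
`r₁ T(Q₁) + r₂ T(Q₂)`, so the infimum over plans of the mixtures is at most `r₁ W₁ + r₂ W₂` up to
any `ε`. Plans exist between density matrices: couple their spectral decompositions as a product.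
-/

open scoped BigOperators ComplexOrder
open Matrix

noncomputable section

abbrev QV (D : ℕ) := EuclideanSpace ℂ (Fin D)

def qproj {D : ℕ} (ψ : QV D) : Matrix (Fin D) (Fin D) ℂ :=
  Matrix.of fun i j => ψ i * (starRingEnd ℂ) (ψ j)

/-- A quantum transport plan between `ρ` and `σ`. -/
structure TPlan (D : ℕ) (ρ σ : Matrix (Fin D) (Fin D) ℂ) where
  n : ℕ
  q : Fin n → ℝ
  ψ : Fin n → QV D
  φ : Fin n → QV D
  q_pos : ∀ j, 0 < q j
  ψ_unit : ∀ j, ‖ψ j‖ = 1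
  φ_unit : ∀ j, ‖φ j‖ = 1
  margL : ∑ j, (q j : ℂ) • qproj (ψ j) = ρ
  margR : ∑ j, (q j : ℂ) • qproj (φ j) = σ

/-- p-th order transport cost of a plan (before the 1/p root). -/
def Tcost {D : ℕ} (d : QV D → QV D → ℝ) (p : ℝ) {ρ σ : Matrix (Fin D) (Fin D) ℂ}
    (Q : TPlan D ρ σ) : ℝ :=
  ∑ j, Q.q j * d (Q.ψ j) (Q.φ j) ^ p

/-- The order-p quantum Wasserstein distance. -/
def Wp {D : ℕ} (d : QV D → QV D → ℝ) (p : ℝ) (ρ σ : Matrix (Fin D) (Fin D) ℂ) : ℝ :=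
  sInf { x | ∃ Q : TPlan D ρ σ, x = (Tcost d p Q) ^ (1/p) }

/-- The infinite-order quantum Wasserstein distance. -/
def Winf {D : ℕ} (d : QV D → QV D → ℝ) (ρ σ : Matrix (Fin D) (Fin D) ℂ) : ℝ :=
  sInf { x | ∃ Q : TPlan D ρ σ, x = ⨆ j, d (Q.ψ j) (Q.φ j) }

def IsDensity {D : ℕ} (ρ : Matrix (Fin D) (Fin D) ℂ) : Prop :=
  ρ.PosSemidef ∧ ρ.trace = 1

/-- Hilbert–Schmidt (Frobenius) norm. -/
def frob {D : ℕ} (A : Matrix (Fin D) (Fin D) ℂ) : ℝ :=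
  Real.sqrt (∑ i, ∑ j, ‖A i j‖ ^ 2)

/-- Action of a matrix on a vector of the Euclidean space. -/
def act {D : ℕ} (U : Matrix (Fin D) (Fin D) ℂ) (ψ : QV D) : QV D :=
  (EuclideanSpace.equiv (Fin D) ℂ).symm (U.mulVec (EuclideanSpace.equiv (Fin D) ℂ ψ))

/-- Dual Lipschitz constant of an observable. -/
def Ld {D : ℕ} (d : QV D → QV D → ℝ) (O : Matrix (Fin D) (Fin D) ℂ) : ℝ :=
  sSup { x | ∃ ρ σ : Matrix (Fin D) (Fin D) ℂ, IsDensity ρ ∧ IsDensity σ ∧ ρ ≠ σ ∧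
    x = ((O * (ρ - σ)).trace).re / Wp d 1 ρ σ }

/-- Double-dual norm. -/
def DWnorm {D : ℕ} (d : QV D → QV D → ℝ) (X : Matrix (Fin D) (Fin D) ℂ) : ℝ :=
  sSup { x | ∃ O : Matrix (Fin D) (Fin D) ℂ, O.IsHermitian ∧ O.trace = 0 ∧ Ld d O ≤ 1 ∧
    x = ((O * X).trace).re }

/-- Trace (nuclear) norm. -/
def traceNorm {D : ℕ} (A : Matrix (Fin D) (Fin D) ℂ) : ℝ :=
  ((Matrix.posSemidef_conjTranspose_mul_self A).1.eigenvectorUnitary.1 *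
    diagonal (fun i => ((√((Matrix.posSemidef_conjTranspose_mul_self A).1.eigenvalues i) : ℝ) : ℂ)) *
    (star (Matrix.posSemidef_conjTranspose_mul_self A).1.eigenvectorUnitary :
      Matrix (Fin D) (Fin D) ℂ)).trace.re

lemma Matrix.IsHermitian.sum_eigenvalues_smul_qproj {D : ℕ} {A : Matrix (Fin D) (Fin D) ℂ}
    (hA : A.IsHermitian) :
    ∑ i, (hA.eigenvalues i : ℂ) • qproj (hA.eigenvectorBasis i) = A := by
  conv_rhs => rw [hA.spectral_theorem]
  ext a b
  simp only [Matrix.sum_apply, Matrix.smul_apply, qproj, Matrix.of_apply, smul_eq_mul,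
    Unitary.conjStarAlgAut_apply, Matrix.mul_apply, Matrix.diagonal_apply, mul_ite, mul_zero,
    Finset.sum_ite_eq', Finset.mem_univ, if_true, Matrix.star_apply,
    Matrix.IsHermitian.eigenvectorUnitary_apply, Function.comp_apply, RCLike.star_def,
    RCLike.ofReal_eq_complex_ofReal]
  exact Finset.sum_congr rfl fun i _ => by ring

lemma Fintype.sum_subtype_pos_eq_sum {ι M : Type*} [Fintype ι] [AddCommMonoid M] {w : ι → ℝ}
    (hw : ∀ i, 0 ≤ w i) (f : ι → M) (hf : ∀ i, w i = 0 → f i = 0) :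
    ∑ i : {i // 0 < w i}, f i = ∑ i, f i := by
  classical
  rw [← Finset.sum_subtype {i | 0 < w i} (by simp) f, Finset.sum_filter_of_ne]
  exact fun i _ hfi => (hw i).lt_of_ne' fun h => hfi (hf i h)

lemma IsDensity.sum_eigenvalues {D : ℕ} {ρ : Matrix (Fin D) (Fin D) ℂ} (h : IsDensity ρ) :
    ∑ i, (h.1.1.eigenvalues i : ℂ) = 1 :=
  h.1.1.trace_eq_sum_eigenvalues.symm.trans h.2

namespace TPlan

variable {D : ℕ} {ρ σ : Matrix (Fin D) (Fin D) ℂ} {ι : Type*} [Fintype ι]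

def ofFintype (q : ι → ℝ) (ψ φ : ι → QV D) (hq : ∀ i, 0 < q i)
    (hψ : ∀ i, ‖ψ i‖ = 1) (hφ : ∀ i, ‖φ i‖ = 1) (hρ : ∑ i, (q i : ℂ) • qproj (ψ i) = ρ)
    (hσ : ∑ i, (q i : ℂ) • qproj (φ i) = σ) : TPlan D ρ σ where
  n := Fintype.card ι
  q := q ∘ (Fintype.equivFin ι).symm
  ψ := ψ ∘ (Fintype.equivFin ι).symm
  φ := φ ∘ (Fintype.equivFin ι).symm
  q_pos _ := hq _
  ψ_unit _ := hψ _
  φ_unit _ := hφ _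
  margL := hρ ▸ Equiv.sum_comp (Fintype.equivFin ι).symm (fun i => (q i : ℂ) • qproj (ψ i))
  margR := hσ ▸ Equiv.sum_comp (Fintype.equivFin ι).symm (fun i => (q i : ℂ) • qproj (φ i))

lemma Tcost_ofFintype (d : QV D → QV D → ℝ) (p : ℝ) (q : ι → ℝ) (ψ φ : ι → QV D)
    (hq hψ hφ hρ hσ) :
    Tcost d p (ofFintype (ρ := ρ) (σ := σ) q ψ φ hq hψ hφ hρ hσ) =
      ∑ i, q i * d (ψ i) (φ i) ^ p :=
  Equiv.sum_comp (Fintype.equivFin ι).symm fun i => q i * d (ψ i) (φ i) ^ p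

def ofNonneg (w : ι → ℝ) (ψ φ : ι → QV D) (hw : ∀ i, 0 ≤ w i)
    (hψ : ∀ i, ‖ψ i‖ = 1) (hφ : ∀ i, ‖φ i‖ = 1) (hρ : ∑ i, (w i : ℂ) • qproj (ψ i) = ρ)
    (hσ : ∑ i, (w i : ℂ) • qproj (φ i) = σ) : TPlan D ρ σ :=
  ofFintype (ι := {i // 0 < w i}) (fun i => w i) (fun i => ψ i) (fun i => φ i) (fun i => i.2)
    (fun i => hψ i) (fun i => hφ i)
    ((Fintype.sum_subtype_pos_eq_sum hw (fun i => (w i : ℂ) • qproj (ψ i)) fun i hi => by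
      simp [hi]).trans hρ)
    ((Fintype.sum_subtype_pos_eq_sum hw (fun i => (w i : ℂ) • qproj (φ i)) fun i hi => by
      simp [hi]).trans hσ)

lemma Tcost_ofNonneg (d : QV D → QV D → ℝ) (p : ℝ) (w : ι → ℝ) (ψ φ : ι → QV D)
    (hw hψ hφ hρ hσ) :
    Tcost d p (ofNonneg (ρ := ρ) (σ := σ) w ψ φ hw hψ hφ hρ hσ) =
      ∑ i, w i * d (ψ i) (φ i) ^ p := by
  rw [ofNonneg, Tcost_ofFintype]
  exact Fintype.sum_subtype_pos_eq_sum hw (fun i => w i * d (ψ i) (φ i) ^ p) fun i hi => by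
    simp [hi]

variable {ρ₁ σ₁ ρ₂ σ₂ : Matrix (Fin D) (Fin D) ℂ}

def mix {r₁ r₂ : ℝ} (hr₁ : 0 ≤ r₁) (hr₂ : 0 ≤ r₂) (Q₁ : TPlan D ρ₁ σ₁) (Q₂ : TPlan D ρ₂ σ₂) :
    TPlan D ((r₁ : ℂ) • ρ₁ + (r₂ : ℂ) • ρ₂) ((r₁ : ℂ) • σ₁ + (r₂ : ℂ) • σ₂) :=
  ofNonneg (Sum.elim (fun i => r₁ * Q₁.q i) (fun i => r₂ * Q₂.q i)) (Sum.elim Q₁.ψ Q₂.ψ)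
    (Sum.elim Q₁.φ Q₂.φ)
    (Sum.rec (fun i => mul_nonneg hr₁ (Q₁.q_pos i).le) (fun i => mul_nonneg hr₂ (Q₂.q_pos i).le))
    (Sum.rec Q₁.ψ_unit Q₂.ψ_unit) (Sum.rec Q₁.φ_unit Q₂.φ_unit)
    (by simp only [Fintype.sum_sum_type, Sum.elim_inl, Sum.elim_inr, Complex.ofReal_mul,
      mul_smul, ← Finset.smul_sum, Q₁.margL, Q₂.margL])
    (by simp only [Fintype.sum_sum_type, Sum.elim_inl, Sum.elim_inr, Complex.ofReal_mul,
      mul_smul, ← Finset.smul_sum, Q₁.margR, Q₂.margR])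

lemma Tcost_mix (d : QV D → QV D → ℝ) (p : ℝ) {r₁ r₂ : ℝ} (hr₁ : 0 ≤ r₁) (hr₂ : 0 ≤ r₂)
    (Q₁ : TPlan D ρ₁ σ₁) (Q₂ : TPlan D ρ₂ σ₂) :
    Tcost d p (mix hr₁ hr₂ Q₁ Q₂) = r₁ * Tcost d p Q₁ + r₂ * Tcost d p Q₂ := by
  rw [mix, Tcost_ofNonneg]
  simp only [Fintype.sum_sum_type, Sum.elim_inl, Sum.elim_inr, Tcost, Finset.mul_sum, mul_assoc]

/-- The product coupling of the spectral decompositions of `ρ` and `σ`. -/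
def ofIsDensity (hρ : IsDensity ρ) (hσ : IsDensity σ) : TPlan D ρ σ :=
  ofNonneg (fun ij : Fin D × Fin D => hρ.1.1.eigenvalues ij.1 * hσ.1.1.eigenvalues ij.2)
    (fun ij => hρ.1.1.eigenvectorBasis ij.1) (fun ij => hσ.1.1.eigenvectorBasis ij.2)
    (fun ij => mul_nonneg (hρ.1.eigenvalues_nonneg _) (hσ.1.eigenvalues_nonneg _))
    (fun ij => hρ.1.1.eigenvectorBasis.orthonormal.1 _)
    (fun ij => hσ.1.1.eigenvectorBasis.orthonormal.1 _)
    (by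
      simp only [Fintype.sum_prod_type, Complex.ofReal_mul, mul_comm (hρ.1.1.eigenvalues _ : ℂ),
        mul_smul, ← Finset.sum_smul, hσ.sum_eigenvalues, one_smul]
      exact hρ.1.1.sum_eigenvalues_smul_qproj)
    (by
      simp only [Fintype.sum_prod_type_right, Complex.ofReal_mul, mul_smul, ← Finset.sum_smul,
        hρ.sum_eigenvalues, one_smul]
      exact hσ.1.1.sum_eigenvalues_smul_qproj)

end TPlan

lemma Tcost_nonneg {D : ℕ} {d : QV D → QV D → ℝ} (hd : ∀ a b, 0 ≤ d a b) (p : ℝ)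
    {ρ σ : Matrix (Fin D) (Fin D) ℂ} (Q : TPlan D ρ σ) :
    0 ≤ Tcost d p Q :=
  Finset.sum_nonneg fun j _ => mul_nonneg (Q.q_pos j).le (Real.rpow_nonneg (hd _ _) p)

lemma Wp_one_eq_iInf {D : ℕ} (d : QV D → QV D → ℝ) (ρ σ : Matrix (Fin D) (Fin D) ℂ) :
    Wp d 1 ρ σ = ⨅ Q : TPlan D ρ σ, Tcost d 1 Q := by
  simp only [Wp, div_one, Real.rpow_one, iInf, Set.range, eq_comm]

/-- `W_1^d` is jointly convex. -/
theorem wasserstein_one_jointly_convex {D : ℕ} (d : QV D → QV D → ℝ)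
    (hdnn : ∀ a b : QV D, 0 ≤ d a b)
    (ρ₁ σ₁ ρ₂ σ₂ : Matrix (Fin D) (Fin D) ℂ)
    (h1 : IsDensity ρ₁) (h2 : IsDensity σ₁) (h3 : IsDensity ρ₂) (h4 : IsDensity σ₂)
    (r₁ r₂ : ℝ) (hr₁ : 0 ≤ r₁) (hr₂ : 0 ≤ r₂) (hr : r₁ + r₂ = 1) :
    Wp d 1 ((r₁ : ℂ) • ρ₁ + (r₂ : ℂ) • ρ₂) ((r₁ : ℂ) • σ₁ + (r₂ : ℂ) • σ₂) ≤
      r₁ * Wp d 1 ρ₁ σ₁ + r₂ * Wp d 1 ρ₂ σ₂ := by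
  have : Nonempty (TPlan D ρ₁ σ₁) := ⟨.ofIsDensity h1 h2⟩
  have : Nonempty (TPlan D ρ₂ σ₂) := ⟨.ofIsDensity h3 h4⟩
  simp only [Wp_one_eq_iInf]
  refine le_of_forall_pos_le_add fun ε hε => ?_
  obtain ⟨Q₁, hQ₁⟩ :=
    exists_lt_of_ciInf_lt (lt_add_of_pos_right (⨅ Q : TPlan D ρ₁ σ₁, Tcost d 1 Q) hε)
  obtain ⟨Q₂, hQ₂⟩ :=
    exists_lt_of_ciInf_lt (lt_add_of_pos_right (⨅ Q : TPlan D ρ₂ σ₂, Tcost d 1 Q) hε)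
  calc ⨅ Q, Tcost d 1 Q
      ≤ Tcost d 1 (TPlan.mix hr₁ hr₂ Q₁ Q₂) :=
        ciInf_le ⟨0, Set.forall_mem_range.2 (Tcost_nonneg hdnn 1)⟩ _
    _ = r₁ * Tcost d 1 Q₁ + r₂ * Tcost d 1 Q₂ := TPlan.Tcost_mix d 1 hr₁ hr₂ Q₁ Q₂
    _ ≤ r₁ * ((⨅ Q, Tcost d 1 Q) + ε) + r₂ * ((⨅ Q, Tcost d 1 Q) + ε) := by gcongr
    _ = r₁ * (⨅ Q, Tcost d 1 Q) + r₂ * (⨅ Q, Tcost d 1 Q) + ε := by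
      linear_combination ε * hr
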